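/- arXiv:math/0612213 — 4 statements merged into one kernel-verified Lean document; each statement's English description precedes it below -/
import Mathlib

section
/- Let x ≥ y ≥ z ≥ 2 be integers with yz - x ≥ x. Then C(x,y,z) = x² + y² + z² - xyz ≤ 4; moreover if z = 2 then x = y and C(x,y,z) = 4. -/
theorem markov_le_four_on_F (x y z : ℤ) (hxy : x ≥ y) (hyz : y ≥ z) (hz : z ≥ 2)
    (hM1 : y*z - x ≥ x) :
    x^2 + y^2 + z^2 - x*y*z ≤ 4 ∧
    (z = 2 → x = y ∧ x^2 + y^2 + z^2 - x*y*z = 4) := by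
  have hle : x^2 + y^2 + z^2 - x*y*z ≤ 4 := by
    nlinarith [mul_nonneg (sub_nonneg.2 hxy) (by linarith : y*z - x - y ≥ 0),
      mul_nonneg (mul_nonneg (sub_nonneg.2 hyz) (by linarith : y + z ≥ 0)) (by linarith : z - 2 ≥ 0),
      mul_nonneg (mul_self_nonneg (z - 2)) (by linarith : z + 1 ≥ 0)]
  refine ⟨hle, fun h2 => ?_⟩
  subst h2
  have hxy' : x = y := by nlinarith [sq_nonneg (x - y)]
  exact ⟨hxy', by subst hxy'; ring⟩
end

section
/- Let x ≥ y ≥ 3 be integers (so z ≥ 3 in the fundamental domain) with x ≥ y ≥ z ≥ 3 and yz ≥ 2x. Then C(x,y,z) = x² + y² + z² - xyz ≤ 0, with equality if and only if (x,y,z) = (3,3,3). -/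
theorem markov_le_zero_on_F3 (x y z : ℤ) (hxy : x ≥ y) (hyz : y ≥ z) (hz : z ≥ 3)
    (hM1 : y*z ≥ 2*x) :
    x^2 + y^2 + z^2 - x*y*z ≤ 0 ∧
    (x^2 + y^2 + z^2 - x*y*z = 0 ↔ x = 3 ∧ y = 3 ∧ z = 3) := by
  have hy : y ≥ 3 := le_trans hz hyz
  have hx : x ≥ 3 := le_trans hy hxy
  have h1 : (x - y) * (x + y - y*z) ≤ 0 := by nlinarith
  have h2 : (y*y) * (z - 2) ≥ z * z := by nlinarith
  have hle : x^2 + y^2 + z^2 - x*y*z ≤ 0 := by nlinarith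
  refine ⟨hle, ⟨fun h => ?_, fun ⟨hx3, hy3, hz3⟩ => by subst hx3; subst hy3; subst hz3; ring⟩⟩
  have hfz : (y*y) * (z - 2) = z * z := by nlinarith
  have hz3 : z = 3 := by nlinarith
  have hy3 : y = 3 := by nlinarith
  have hx3 : x = 3 := by nlinarith
  exact ⟨hx3, hy3, hz3⟩
end

section
/- If integers x, y, z satisfy x² + y² + z² - xyz = 0, then 3 divides x, 3 divides y, and 3 divides z. -/
theorem markov_divisible_by_three (x y z : ℤ) (h : x^2 + y^2 + z^2 - x*y*z = 0) :
    (3 ∣ x) ∧ (3 ∣ y) ∧ (3 ∣ z) := by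
  have key : ∀ a b c : ZMod 3, a^2 + b^2 + c^2 - a*b*c = 0 → a = 0 ∧ b = 0 ∧ c = 0 := by decide
  have h3 : ((x : ZMod 3))^2 + (y : ZMod 3)^2 + (z : ZMod 3)^2 - (x : ZMod 3)*(y : ZMod 3)*(z : ZMod 3) = 0 := by
    have := congrArg (Int.cast : ℤ → ZMod 3) h
    push_cast at this
    exact this
  obtain ⟨hx, hy, hz⟩ := key _ _ _ h3
  exact ⟨by exact_mod_cast (ZMod.intCast_zmod_eq_zero_iff_dvd x 3).mp hx,
    by exact_mod_cast (ZMod.intCast_zmod_eq_zero_iff_dvd y 3).mp hy,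
    by exact_mod_cast (ZMod.intCast_zmod_eq_zero_iff_dvd z 3).mp hz⟩
end

section
/- If (x,y,z) ∈ ℝ³ is a singular point of the surface x² + y² + z² - xyz = C (i.e., all three partial derivatives 2x - yz, 2y - xz, 2z - xy vanish) with (x,y,z) ≠ (0,0,0), then (x,y,z) ∈ {(2,2,2), (2,-2,-2), (-2,2,-2), (-2,-2,2)} and C = 4. -/
theorem singular_points (x y z C : ℝ)
    (hV : x^2 + y^2 + z^2 - x*y*z = C)
    (h1 : 2*x - y*z = 0) (h2 : 2*y - x*z = 0) (h3 : 2*z - x*y = 0)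
    (hne : ¬(x = 0 ∧ y = 0 ∧ z = 0)) :
    ((x, y, z) = ((2:ℝ), (2:ℝ), (2:ℝ)) ∨ (x, y, z) = (2, -2, -2) ∨
     (x, y, z) = (-2, 2, -2) ∨ (x, y, z) = (-2, -2, 2)) ∧ C = 4 := by
  have e1 : 2*x^2 = x*y*z := by linear_combination x*h1
  have e2 : 2*y^2 = x*y*z := by linear_combination y*h2
  have e3 : 2*z^2 = x*y*z := by linear_combination z*h3
  have exy : x^2 = y^2 := by linarith
  have exz : x^2 = z^2 := by linarith
  have hx0 : x ≠ 0 := by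
    intro hx
    apply hne
    have hy : y = 0 := by nlinarith
    have hz : z = 0 := by nlinarith
    exact ⟨hx, hy, hz⟩
  have hx4 : x^2 = 4 := by
    have key : x^4 - 4*x^2 = 0 := by
      linear_combination z^2*exy + x^2*exz - (y*z+2*x)*h1
    have : x^2*(x^2 - 4) = 0 := by linarith [key]
    rcases mul_eq_zero.mp this with h | h
    · exact absurd (pow_eq_zero_iff (by norm_num) |>.mp h) hx0
    · linarith
  have hxcase : (x-2)*(x+2) = 0 := by linear_combination hx4
  have hy4 : y^2 = 4 := by linarith
  have hycase : (y-2)*(y+2) = 0 := by linear_combination hy4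
  rcases mul_eq_zero.mp hxcase with hx | hx <;>
  rcases mul_eq_zero.mp hycase with hy | hy
  · have hx' : x = 2 := by linarith
    have hy' : y = 2 := by linarith
    have hz : z = 2 := by nlinarith [h2]
    subst hx' hy' hz
    constructor
    · left; rfl
    · linarith
  · have hx' : x = 2 := by linarith
    have hy' : y = -2 := by linarith
    have hz : z = -2 := by nlinarith [h2]
    subst hx' hy' hz
    constructor
    · right; left; rfl
    · linarith
  · have hx' : x = -2 := by linarith
    have hy' : y = 2 := by linarith
    have hz : z = -2 := by nlinarith [h2]
    subst hx' hy' hz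
    constructor
    · right; right; left; rfl
    · linarith
  · have hx' : x = -2 := by linarith
    have hy' : y = -2 := by linarith
    have hz : z = 2 := by nlinarith [h2]
    subst hx' hy' hz
    constructor
    · right; right; right; rfl
    · linarith
end
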